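/- arXiv:1702.02559 — 2 statements merged into one kernel-verified Lean document; each statement's English description precedes it below -/
import Mathlib

section
/- (Multi-pass recursion, general case.) Define α₁ = 0 and, for i ≥ 2, αᵢ = (i−1)/(4(i+1)²) + (1 − (3(i+1)+2)/(2(i+1)²))·αᵢ₋₁. Then for all i ≥ 1, αᵢ ≥ 1/6 − 4/(3i). -/
/-!
The recursion is affine in `αᵢ₋₁` with a nonnegative coefficient, so it preserves lower bounds:
it suffices that `βᵢ = 1/6 - 4/(3i)` is a subsolution. Indeed, feeding `βᵢ₋₁` into the
recursion overshoots `βᵢ` by exactly `4 / (3 i (i+1)²)`.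
-/

lemma le_of_affine_recurrence {a b f c : ℕ → ℝ} {m : ℕ} (hbase : b m ≤ a m)
    (hc : ∀ n, m ≤ n → 0 ≤ c n) (hrec : ∀ n, m ≤ n → a (n + 1) = f n + c n * a n)
    (hsub : ∀ n, m ≤ n → b (n + 1) ≤ f n + c n * b n) :
    ∀ n, m ≤ n → b n ≤ a n := by
  intro n hn
  induction n, hn using Nat.le_induction with
  | base => exact hbase
  | succ n hn ih =>
    calc b (n + 1) ≤ f n + c n * b n := hsub n hn
      _ ≤ f n + c n * a n := by gcongr; exact hc n hn
      _ = a (n + 1) := (hrec n hn).symm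

lemma one_sub_div_nonneg_of_one_le {x : ℝ} (hx : 1 ≤ x) :
    0 ≤ 1 - (3 * (x + 2) + 2) / (2 * (x + 2) ^ 2) := by
  rw [sub_nonneg, div_le_one (by positivity)]
  nlinarith

lemma recursion_step_sub_lowerBound {x : ℝ} (hx : 0 < x) :
    x / (4 * (x + 2) ^ 2) + (1 - (3 * (x + 2) + 2) / (2 * (x + 2) ^ 2)) * (1 / 6 - 4 / (3 * x))
      - (1 / 6 - 4 / (3 * (x + 1))) = 4 / (3 * (x + 1) * (x + 2) ^ 2) := by
  field_simp
  ring

theorem stmt_14 (a : ℕ → ℝ) (h1 : a 1 = 0)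
    (hrec : ∀ i : ℕ, 2 ≤ i →
      a i = ((i : ℝ) - 1) / (4 * (i + 1) ^ 2)
          + (1 - (3 * (i + 1) + 2) / (2 * (i + 1) ^ 2)) * a (i - 1)) :
    ∀ i : ℕ, 1 ≤ i → a i ≥ 1 / 6 - 4 / (3 * i) := by
  refine le_of_affine_recurrence (b := fun i : ℕ ↦ 1 / 6 - 4 / (3 * (i : ℝ)))
    (f := fun n : ℕ ↦ (n : ℝ) / (4 * ((n : ℝ) + 2) ^ 2))
    (c := fun n : ℕ ↦ 1 - (3 * ((n : ℝ) + 2) + 2) / (2 * ((n : ℝ) + 2) ^ 2)) ?_ ?_ ?_ ?_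
  · norm_num [h1]
  · intro n hn
    exact one_sub_div_nonneg_of_one_le (by exact_mod_cast hn)
  · intro n hn
    rw [hrec (n + 1) (by omega), Nat.add_sub_cancel]
    push_cast
    ring
  · intro n hn
    have hx : (0 : ℝ) < n := by exact_mod_cast hn
    have hgap := recursion_step_sub_lowerBound hx
    push_cast
    linarith [show (0 : ℝ) < 4 / (3 * (n + 1) * (n + 2) ^ 2) by positivity]
end

section
/- (Uncovered-vertex bound for maximal matchings.) Let M₀ and M* be matchings in a graph G with M₀ maximal. Then |V(M*) ∖ V(M₀)| ≥ 2|M*| − 2|M₀|, and the edges of M* incident to vertices of V(M*) ∖ V(M₀) all have their other endpoint in V(M₀); consequently any maximal matching M₁ in the bipartite set of edges between V∖V(M₀) and V(M₀) satisfies |M₁| ≥ |M*| − |M₀|. -/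
/-!
Since `M₀` is maximal, `V(M₀)` is a vertex cover, so the `M*`-partner of every vertex
`u ∈ V(M*) ∖ V(M₀)` lies in `V(M₀)` and the edge joining them crosses the cut. Maximality of `M₁`
among cut matchings forces `M₁` to cover `u` or its partner; sending `u` to itself in the first
case and to its partner otherwise is injective, so `|V(M*) ∖ V(M₀)| ≤ |V(M₁)| = 2|M₁|`. The first
inequality is just `|V(M*)| ≤ |V(M*) ∖ V(M₀)| + |V(M₀)|`.
-/

open Set

namespace SimpleGraph.Subgraph

variable {V : Type*} {G : SimpleGraph V} {M : G.Subgraph}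

theorem IsMatching.ncard_verts [Finite V] (hM : M.IsMatching) :
    M.verts.ncard = 2 * M.edgeSet.ncard := by
  have : Fintype M.edgeSet := Fintype.ofFinite _
  have hfiber (e : M.edgeSet) : Nat.card {v // hM.toEdge v = e} = 2 := by
    obtain ⟨⟨u, v⟩, huv⟩ := e
    change Nat.card (hM.toEdge ⁻¹' {⟨s(u, v), huv⟩}) = 2
    rw [Nat.card_coe_set_eq, hM.toEdge_preimage_singleton huv, ncard_pair (by simpa using huv.ne)]
  rw [← Nat.card_coe_set_eq, ← Nat.card_congr (Equiv.sigmaFiberEquiv hM.toEdge), Nat.card_sigma,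
    Finset.sum_congr rfl fun e _ => hfiber e, Finset.sum_const, Finset.card_univ,
    ← Nat.card_eq_fintype_card, Nat.card_coe_set_eq, smul_eq_mul, mul_comm]

theorem IsMatching.sup_subgraphOfAdj (hM : M.IsMatching) {a b : V} (hab : G.Adj a b)
    (ha : a ∉ M.verts) (hb : b ∉ M.verts) : (M ⊔ G.subgraphOfAdj hab).IsMatching := by
  refine hM.sup (.subgraphOfAdj hab) ?_
  rw [support_subgraphOfAdj, hM.support_eq_verts]
  exact disjoint_insert_right.mpr ⟨ha, disjoint_singleton_right.mpr hb⟩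

theorem IsMatching.mem_or_mem_of_maximal {P : V → V → Prop} (hP : Std.Symm P)
    (hM : M.IsMatching) (hMP : ∀ u v, M.Adj u v → P u v)
    (hmax : ∀ M' : G.Subgraph, M'.IsMatching → (∀ u v, M'.Adj u v → P u v) → M ≤ M' → M' = M)
    {a b : V} (hab : G.Adj a b) (hPab : P a b) : a ∈ M.verts ∨ b ∈ M.verts := by
  by_contra! ⟨ha, hb⟩
  have hP' : ∀ u v, (M ⊔ G.subgraphOfAdj hab).Adj u v → P u v := by
    rintro u v (huv | huv)
    · exact hMP u v huv
    · obtain ⟨rfl, rfl⟩ | ⟨rfl, rfl⟩ := Sym2.eq_iff.mp huv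
      exacts [hPab, hP.symm _ _ hPab]
  have heq := hmax _ (hM.sup_subgraphOfAdj hab ha hb) hP' le_sup_left
  exact ha (heq ▸ Or.inr (by simp))

theorem IsMatching.isVertexCover_of_maximal (hM : M.IsMatching)
    (hmax : ∀ M' : G.Subgraph, M'.IsMatching → M ≤ M' → M' = M) : G.IsVertexCover M.verts :=
  fun _ _ hab => hM.mem_or_mem_of_maximal (P := fun _ _ => True) ⟨fun _ _ _ => trivial⟩
    (fun _ _ _ => trivial) (fun M' hM' _ => hmax M' hM') hab trivial

theorem IsMatching.ncard_verts_diff_le (hM : M.IsMatching) {C D : Set V} (hD : D.Finite)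
    (hC : G.IsVertexCover C) (hCD : ∀ u v, M.Adj u v → u ∉ C → u ∈ D ∨ v ∈ D) :
    (M.verts \ C).ncard ≤ D.ncard := by
  classical
  choose! partner hpartner using fun v (hv : v ∈ M.verts) => (hM hv).exists
  have partner_mem {u} (hu : u ∈ M.verts \ C) : partner u ∈ C :=
    (hC (M.adj_sub (hpartner u hu.1))).resolve_left hu.2
  refine ncard_le_ncard_of_injOn (fun u => if u ∈ D then u else partner u) ?_ ?_ hD
  · intro u hu
    show (if u ∈ D then u else partner u) ∈ D
    split_ifs with huD
    · exact huD
    · exact (hCD u _ (hpartner u hu.1) hu.2).resolve_left huD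
  · intro u hu u' hu' h
    beta_reduce at h
    split_ifs at h with huD hu'D hu'D
    · exact h
    · exact absurd (h ▸ partner_mem hu') hu.2
    · exact absurd (h ▸ partner_mem hu) hu'.2
    · exact hM.eq_of_adj_right (hpartner u hu.1) (h ▸ hpartner u' hu'.1)

end SimpleGraph.Subgraph

open SimpleGraph Subgraph

theorem stmt_16_general {V : Type*} [Fintype V] (G : SimpleGraph V)
    (M₀ Mstar M₁ : G.Subgraph)
    (hmatch : M₀.IsMatching)
    (hmax : ∀ M' : G.Subgraph, M'.IsMatching → M₀ ≤ M' → M' = M₀)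
    (hstar : Mstar.IsMatching)
    (hM₁ : M₁.IsMatching)
    (hM₁F : ∀ u v : V, M₁.Adj u v → (u ∈ M₀.verts ↔ v ∉ M₀.verts))
    (hM₁max : ∀ M' : G.Subgraph, M'.IsMatching →
      (∀ u v : V, M'.Adj u v → (u ∈ M₀.verts ↔ v ∉ M₀.verts)) → M₁ ≤ M' → M' = M₁) :
    ((Mstar.verts \ M₀.verts).ncard : ℤ) ≥ 2 * Mstar.edgeSet.ncard - 2 * M₀.edgeSet.ncard
    ∧ (M₁.edgeSet.ncard : ℤ) ≥ Mstar.edgeSet.ncard - M₀.edgeSet.ncard := by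
  have hcover : G.IsVertexCover M₀.verts := hmatch.isVertexCover_of_maximal hmax
  have hcross : Std.Symm fun u v : V => u ∈ M₀.verts ↔ v ∉ M₀.verts := ⟨fun _ _ => by tauto⟩
  have huncovered : (Mstar.verts \ M₀.verts).ncard ≤ M₁.verts.ncard := by
    refine hstar.ncard_verts_diff_le (toFinite _) hcover fun u v huv hu => ?_
    have hv : v ∈ M₀.verts := (hcover (Mstar.adj_sub huv)).resolve_left hu
    exact hM₁.mem_or_mem_of_maximal hcross hM₁F hM₁max (Mstar.adj_sub huv) (by tauto)
  have hsplit := ncard_le_ncard_sdiff_add_ncard Mstar.verts M₀.verts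
  rw [hmatch.ncard_verts, hstar.ncard_verts] at hsplit
  rw [hM₁.ncard_verts] at huncovered
  omega

theorem stmt_16 {V : Type*} [Fintype V] (G : SimpleGraph V)
    (M₀ Mstar M₁ : G.Subgraph)
    (hmatch : M₀.IsMatching)
    (hmax : ∀ M' : G.Subgraph, M'.IsMatching → M₀ ≤ M' → M' = M₀)
    (hstar : Mstar.IsMatching)
    (hstarmax : ∀ M' : G.Subgraph, M'.IsMatching → Mstar.edgeSet.ncard ≥ M'.edgeSet.ncard)
    (hM₁ : M₁.IsMatching)
    (hM₁F : ∀ u v : V, M₁.Adj u v → (u ∈ M₀.verts ↔ v ∉ M₀.verts))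
    (hM₁max : ∀ M' : G.Subgraph, M'.IsMatching →
      (∀ u v : V, M'.Adj u v → (u ∈ M₀.verts ↔ v ∉ M₀.verts)) → M₁ ≤ M' → M' = M₁) :
    ((Mstar.verts \ M₀.verts).ncard : ℤ) ≥ 2 * Mstar.edgeSet.ncard - 2 * M₀.edgeSet.ncard
    ∧ (M₁.edgeSet.ncard : ℤ) ≥ Mstar.edgeSet.ncard - M₀.edgeSet.ncard :=
  stmt_16_general G M₀ Mstar M₁ hmatch hmax hstar hM₁ hM₁F hM₁max
end
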